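/- Let k ≥ 3, let b_k = 2^{k-1} - a_{k-2} + 1, and let 0 ≤ u ≤ 2^{k-1} - b_k. Then deg(B_{b_k + u}) = deg(B_{a_{k-1} + u}) + 1 and deg(B_{2^k - (b_k + u)}) = deg(B_{a_{k-1} + u}) + 1. -/

import Mathlib

open Polynomial in
/-- The Stern polynomial: `B 0 = 0`, `B 1 = 1`, `B (2n) = t * B n`, `B (2n+1) = B n + B (n+1)`. -/
noncomputable def sternP : ℕ → Polynomial ℕ
  | 0 => 0
  | 1 => 1
  | n + 2 =>
    if (n + 2) % 2 = 0 then X * sternP (n / 2 + 1)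
    else sternP (n / 2 + 1) + sternP (n / 2 + 2)
decreasing_by all_goals omega

/-- The digits of a BSD representation lie in {-1, 0, 1}. -/
def IsBSDDigits {i : ℕ} (b : Fin i → ℤ) : Prop := ∀ j, b j ∈ ({-1, 0, 1} : Set ℤ)

/-- The value represented by the digit string `b` (least significant digit `b 0`). -/
def bsdVal {i : ℕ} (b : Fin i → ℤ) : ℤ := ∑ j : Fin i, b j * 2 ^ (j : ℕ)

/-- `b` is a (not necessarily reduced) non-adjacent form digit string of length `k`:
digits in {-1,0,1}, no two adjacent digits both nonzero, and nonzero leading digit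
(when `k > 0`). -/
def IsReducedNAF {k : ℕ} (b : Fin k → ℤ) : Prop :=
  IsBSDDigits b ∧
  (∀ j : Fin k, ∀ h : (j : ℕ) + 1 < k, b j = 0 ∨ b ⟨(j : ℕ) + 1, h⟩ = 0) ∧
  (∀ h : 0 < k, b ⟨k - 1, Nat.sub_lt h one_pos⟩ ≠ 0)

/-- `m` has a reduced NAF representation of bitlength `k`. -/
def HasNAFLen (m : ℤ) (k : ℕ) : Prop :=
  ∃ b : Fin k → ℤ, IsReducedNAF b ∧ bsdVal b = m

/-- `I k`: the set of positive integers of NAF-bitlength `k`. -/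
def NAFInterval (k : ℕ) : Set ℕ := {n : ℕ | HasNAFLen (n : ℤ) k}

/-- `a k = min I k`: `a 1 = 1`, `a 2 = 2`, `a k = 2^(k-2) + a (k-2)`. -/
def aseq : ℕ → ℕ
  | 0 => 0
  | 1 => 1
  | 2 => 2
  | k + 3 => 2 ^ (k + 1) + aseq (k + 1)

/-- The NAF-bitlength of `n`. -/
noncomputable def nafLen (n : ℕ) : ℕ := sInf {k : ℕ | HasNAFLen (n : ℤ) k}

/-- The minimal Hamming weight of a BSD representation of `n` of length
equal to its NAF-bitlength. -/
noncomputable def minWeight (n : ℕ) : ℕ :=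
  sInf {w : ℕ | ∃ b : Fin (nafLen n) → ℤ,
    IsBSDDigits b ∧ bsdVal b = (n : ℤ) ∧ {j | b j ≠ 0}.ncard = w}

/-- `Z n`: the number of zeros in an optimal (minimal-weight) BSD representation of `n`
of length equal to its NAF-bitlength. -/
noncomputable def Zfun (n : ℕ) : ℕ := nafLen n - minWeight n

/-- `M n`: the number of optimal (minimal-weight) BSD representations of `n`
of length equal to its NAF-bitlength. -/
noncomputable def Mfun (n : ℕ) : ℕ :=
  {b : Fin (nafLen n) → ℤ |
    IsBSDDigits b ∧ bsdVal b = (n : ℤ) ∧ {j | b j ≠ 0}.ncard = minWeight n}.ncard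

/-!
Write `d n` for the degree of `B n`. Then `d (2n) = d n + 1`, and since Stern polynomials have
nonnegative coefficients, `d (2n+1) = max (d n) (d (n+1))`. With `j = k - 2` and
`n = a_{k-1} + u`, the two indices in the theorem are `2^j + n` and `3·2^j - n`, where
`a_j ≤ n ≤ 2^j`. On this window both have degree `d n + 1`, by induction on `j`: halving the
index maps the window at level `j + 1` into the one at level `j`. The only exception is the
endpoint `n = a_{j+1}` of the second family, where `3·2^{j+1} - a_{j+1} = a_{j+4} - 1`, and
there the explicit values `d a_m = ⌊m/2⌋`, `d (a_m - 1) = ⌊(m-1)/2⌋` settle it.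
-/

namespace Polynomial

variable {R : Type*} [Semiring R] [PartialOrder R] [CanonicallyOrderedAdd R]

theorem add_eq_zero_iff_of_canonicallyOrderedAdd {p q : R[X]} : p + q = 0 ↔ p = 0 ∧ q = 0 := by
  simp [Polynomial.ext_iff, add_eq_zero, forall_and]

theorem natDegree_add_of_canonicallyOrderedAdd (p q : R[X]) :
    (p + q).natDegree = max p.natDegree q.natDegree := by
  rcases eq_or_ne p 0 with rfl | hp
  · simp
  rcases eq_or_ne q 0 with rfl | hq
  · simp
  have hlc : p.leadingCoeff + q.leadingCoeff ≠ 0 := fun h =>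
    hp (leadingCoeff_eq_zero.1 (add_eq_zero.1 h).1)
  have h := degree_add_eq_of_leadingCoeff_add_ne_zero hlc
  rw [degree_eq_natDegree hp, degree_eq_natDegree hq] at h
  exact natDegree_eq_of_degree_eq_some (h.trans (WithBot.coe_max ..).symm)

end Polynomial

open Polynomial

theorem sternP_two_mul (n : ℕ) : sternP (2 * n) = X * sternP n := by
  rcases n with _ | n
  · simp [sternP]
  · rw [show 2 * (n + 1) = 2 * n + 2 by ring, sternP]
    simp

theorem sternP_two_mul_add_one (n : ℕ) : sternP (2 * n + 1) = sternP n + sternP (n + 1) := by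
  rcases n with _ | n
  · simp [sternP]
  · rw [show 2 * (n + 1) + 1 = 2 * n + 1 + 2 by ring, sternP]
    have h1 : (2 * n + 1) / 2 = n := by omega
    simp [h1, Nat.add_mod]

theorem sternP_ne_zero {n : ℕ} (hn : n ≠ 0) : sternP n ≠ 0 := by
  induction n using Nat.strong_induction_on with
  | _ n ih =>
    rcases Nat.even_or_odd' n with ⟨m, rfl | rfl⟩
    · rw [sternP_two_mul]
      exact mul_ne_zero X_ne_zero (ih m (by omega) (by omega))
    · rcases m with _ | m
      · simp [sternP]
      rw [sternP_two_mul_add_one, Ne, add_eq_zero_iff_of_canonicallyOrderedAdd, not_and]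
      exact fun h _ => ih (m + 1) (by omega) (by omega) h

noncomputable def sternDeg (n : ℕ) : ℕ := (sternP n).natDegree

theorem sternDeg_two_mul {n : ℕ} (hn : n ≠ 0) : sternDeg (2 * n) = sternDeg n + 1 := by
  rw [sternDeg, sternDeg, sternP_two_mul, natDegree_X_mul (sternP_ne_zero hn)]

theorem sternDeg_two_mul_add_one (n : ℕ) :
    sternDeg (2 * n + 1) = max (sternDeg n) (sternDeg (n + 1)) := by
  simp only [sternDeg, sternP_two_mul_add_one, natDegree_add_of_canonicallyOrderedAdd]

theorem three_mul_aseq_add_mod_two : ∀ {m : ℕ}, m ≠ 0 → 3 * aseq m + m % 2 = 2 ^ m + 2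
  | 1, _ => rfl
  | 2, _ => rfl
  | m + 3, _ => by
    have ih := three_mul_aseq_add_mod_two (m := m + 1) (by omega)
    rw [aseq, show 2 ^ (m + 3) = 4 * 2 ^ (m + 1) by ring]
    omega

theorem sternDeg_aseq {m : ℕ} (hm : 2 ≤ m) :
    sternDeg (aseq m) = m / 2 ∧ sternDeg (aseq m - 1) = (m - 1) / 2 := by
  induction m, hm using Nat.le_induction with
  | base => simp [aseq, sternDeg, sternP]
  | succ m hm ih =>
    have ha := three_mul_aseq_add_mod_two (m := m) (by omega)
    have ha' := three_mul_aseq_add_mod_two (m := m + 1) (by omega)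
    have hpow : 2 ^ (m + 1) = 2 * 2 ^ m := pow_succ' 2 m
    have hpow' : 4 ≤ 2 ^ m := Nat.pow_le_pow_right two_pos hm
    rcases Nat.even_or_odd' m with ⟨i, rfl | rfl⟩
    · rw [show aseq (2 * i + 1) = 2 * (aseq (2 * i) - 1) + 1 by omega,
        show 2 * (aseq (2 * i) - 1) + 1 - 1 = 2 * (aseq (2 * i) - 1) by omega,
        sternDeg_two_mul_add_one, sternDeg_two_mul (by omega),
        Nat.sub_add_cancel (by omega), ih.1, ih.2]
      omega
    · rw [show aseq (2 * i + 1 + 1) = 2 * aseq (2 * i + 1) by omega,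
        show 2 * aseq (2 * i + 1) - 1 = 2 * (aseq (2 * i + 1) - 1) + 1 by omega,
        sternDeg_two_mul (by omega), sternDeg_two_mul_add_one,
        Nat.sub_add_cancel (by omega), ih.1, ih.2]
      omega

theorem sternDeg_two_pow_add {j n : ℕ} (hj : 1 ≤ j) (hn : aseq j ≤ n + 1) (hn' : n ≤ 2 ^ j) :
    sternDeg (2 ^ j + n) = sternDeg n + 1 := by
  induction j, hj using Nat.le_induction generalizing n with
  | base =>
    interval_cases n <;> simp [sternDeg, sternP, natDegree_add_of_canonicallyOrderedAdd]
  | succ j hj ih =>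
    have ha := three_mul_aseq_add_mod_two (m := j) (by omega)
    have ha' := three_mul_aseq_add_mod_two (m := j + 1) (by omega)
    have hpow : 2 ^ (j + 1) = 2 * 2 ^ j := pow_succ' 2 j
    have hpow' : 2 ≤ 2 ^ j := Nat.le_self_pow (by omega) 2
    rcases Nat.even_or_odd' n with ⟨m, rfl | rfl⟩
    · rw [hpow, ← mul_add, sternDeg_two_mul (by positivity), sternDeg_two_mul (by omega),
        ih (by omega) (by omega)]
    · rw [show 2 ^ (j + 1) + (2 * m + 1) = 2 * (2 ^ j + m) + 1 by omega,
        sternDeg_two_mul_add_one, sternDeg_two_mul_add_one, add_assoc,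
        ih (by omega) (by omega), ih (by omega) (by omega)]
      omega

theorem sternDeg_three_mul_two_pow_sub_aseq {m : ℕ} (hm : 2 ≤ m) :
    sternDeg (3 * 2 ^ m - aseq m) = sternDeg (aseq m) + 1 := by
  have ha := three_mul_aseq_add_mod_two (m := m) (by omega)
  have ha' := three_mul_aseq_add_mod_two (m := m + 3) (by omega)
  have hpow : 2 ^ (m + 3) = 8 * 2 ^ m := by ring
  rw [show 3 * 2 ^ m - aseq m = aseq (m + 3) - 1 by omega, (sternDeg_aseq (by omega)).2,
    (sternDeg_aseq hm).1]
  omega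

theorem sternDeg_three_mul_two_pow_sub {j n : ℕ} (hj : 1 ≤ j) (hn : aseq j ≤ n)
    (hn' : n ≤ 2 ^ j) : sternDeg (3 * 2 ^ j - n) = sternDeg n + 1 := by
  induction j, hj using Nat.le_induction generalizing n with
  | base =>
    replace hn : 1 ≤ n := hn
    interval_cases n <;> simp [sternDeg, sternP, natDegree_add_of_canonicallyOrderedAdd]
  | succ j hj ih =>
    rcases hn.eq_or_lt with rfl | hlt
    · exact sternDeg_three_mul_two_pow_sub_aseq (by omega)
    have ha := three_mul_aseq_add_mod_two (m := j) (by omega)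
    have ha' := three_mul_aseq_add_mod_two (m := j + 1) (by omega)
    have hpow : 2 ^ (j + 1) = 2 * 2 ^ j := pow_succ' 2 j
    rcases Nat.even_or_odd' n with ⟨m, rfl | rfl⟩
    · rw [show 3 * 2 ^ (j + 1) - 2 * m = 2 * (3 * 2 ^ j - m) by omega,
        sternDeg_two_mul (by omega), sternDeg_two_mul (by omega), ih (by omega) (by omega)]
    · rw [show 3 * 2 ^ (j + 1) - (2 * m + 1) = 2 * (3 * 2 ^ j - (m + 1)) + 1 by omega,
        sternDeg_two_mul_add_one, sternDeg_two_mul_add_one,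
        show 3 * 2 ^ j - (m + 1) + 1 = 3 * 2 ^ j - m by omega,
        ih (by omega) (by omega), ih (by omega) (by omega)]
      omega

theorem stern_deg_B (k u : ℕ) (hk : 3 ≤ k)
    (hu : u ≤ 2 ^ (k - 1) - (2 ^ (k - 1) - aseq (k - 2) + 1)) :
    (sternP (2 ^ (k - 1) - aseq (k - 2) + 1 + u)).natDegree
      = (sternP (aseq (k - 1) + u)).natDegree + 1 ∧
    (sternP (2 ^ k - (2 ^ (k - 1) - aseq (k - 2) + 1 + u))).natDegree
      = (sternP (aseq (k - 1) + u)).natDegree + 1 := by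
  obtain ⟨j, rfl⟩ : ∃ j, k = j + 2 := ⟨k - 2, by omega⟩
  simp only [Nat.add_sub_cancel, show j + 2 - 1 = j + 1 by omega] at hu ⊢
  have ha := three_mul_aseq_add_mod_two (m := j) (by omega)
  have ha' := three_mul_aseq_add_mod_two (m := j + 1) (by omega)
  have hpow : 2 ^ (j + 1) = 2 * 2 ^ j := pow_succ' 2 j
  have hpow' : 2 ^ (j + 2) = 4 * 2 ^ j := by ring
  set n := aseq (j + 1) + u
  rw [show 2 ^ (j + 1) - aseq j + 1 + u = 2 ^ j + n by omega,
    show 2 ^ (j + 2) - (2 ^ j + n) = 3 * 2 ^ j - n by omega]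
  exact ⟨sternDeg_two_pow_add (by omega) (by omega) (by omega),
    sternDeg_three_mul_two_pow_sub (by omega) (by omega) (by omega)⟩
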